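/- Let X and Y be disjoint Hausdorff spaces with Y locally compact, p : X → Y × [0, +∞) a continuous proper map, and f the composition of p with the projection to Y. Then the identity map from the teardrop X ∪_p Y to Whyburn's unified space X ⊕ Y is continuous; combined with the converse direction, the identity from X ⊕ Y to X ∪_p Y is a homeomorphism if and only if p is proper. -/

import Mathlib

/-!
Whyburn's open sets form a topology on `X ⊕ Y` once `Y` is Hausdorff, and the teardrop topology is
generated by the open sets of `X` and the collapse-preimages of open sets of `Y × EReal`, so
comparing the two topologies reduces to open sets of one kind and generators of the other.

If `W` is Whyburn-open and `y ∈ W ∩ Y`, choose a compact neighbourhood `K ⊆ W ∩ Y` of `y`; the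
compact set `f⁻¹ K \ W` has heights bounded by some `M`, so the collapse-preimage of
`interior K × (M, ⊤]` is a teardrop neighbourhood of `y` inside `W`.

Conversely, an open `V ⊆ Y × EReal` containing `K × {⊤}` contains a tube `K × (M, ⊤]`, so the
points of `f⁻¹ K` whose collapse misses `V` lie in `p⁻¹ (K × [0, M])`, which is compact when `p`
is proper. Finally, Whyburn's condition for the collapse-preimage of `univ × (b, ⊤]`, with `b`
bounding the heights of a compact `K ⊆ Y × ℝ`, shows that `p⁻¹ K` is compact.
-/

open Topology Set

/-- The collapse map of the teardrop `X ∪_p Y` (modelled in `Y × EReal`). -/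
noncomputable def teardropCollapse {X Y : Type*} (p : X → Y × ℝ) : X ⊕ Y → Y × EReal
  | Sum.inl x => ((p x).1, ((p x).2 : EReal))
  | Sum.inr y => (y, ⊤)

/-- The teardrop topology on `X ⊔ Y`. -/
def teardropTop {X Y : Type*} [TopologicalSpace X] [TopologicalSpace Y]
    (p : X → Y × ℝ) : TopologicalSpace (X ⊕ Y) :=
  TopologicalSpace.generateFrom
    ({S | ∃ U : Set X, IsOpen U ∧ S = Sum.inl '' U} ∪
     {S | ∃ V : Set (Y × EReal), IsOpen V ∧ S = teardropCollapse p ⁻¹' V})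

/-- Whyburn's openness condition for the unified space `X ⊕ Y` attached to
`f : X → Y`: `V` is open iff `V ∩ X` and `V ∩ Y` are open and for every
compact `K ⊆ V ∩ Y`, the set `f⁻¹(K) ∩ (X \ V)` is compact. -/
def WhyburnOpen {X Y : Type*} [TopologicalSpace X] [TopologicalSpace Y]
    (f : X → Y) (V : Set (X ⊕ Y)) : Prop :=
  IsOpen (Sum.inl ⁻¹' V) ∧ IsOpen (Sum.inr ⁻¹' V) ∧
    ∀ K : Set Y, K ⊆ Sum.inr ⁻¹' V → IsCompact K →
      IsCompact (f ⁻¹' K ∩ (Sum.inl ⁻¹' V)ᶜ)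

section Whyburn

variable {X Y : Type*} [TopologicalSpace X] [TopologicalSpace Y] {f : X → Y}

lemma whyburnOpen_univ (f : X → Y) : WhyburnOpen f univ :=
  ⟨isOpen_univ, isOpen_univ, fun K _ _ => by simp⟩

lemma WhyburnOpen.inter {s t : Set (X ⊕ Y)} (hs : WhyburnOpen f s) (ht : WhyburnOpen f t) :
    WhyburnOpen f (s ∩ t) := by
  refine ⟨hs.1.inter ht.1, hs.2.1.inter ht.2.1, fun K hK hKc => ?_⟩
  rw [preimage_inter, compl_inter, inter_union_distrib_left]
  exact (hs.2.2 K (fun y hy => (hK hy).1) hKc).union (ht.2.2 K (fun y hy => (hK hy).2) hKc)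

lemma WhyburnOpen.sUnion [T2Space Y] {S : Set (Set (X ⊕ Y))} (h : ∀ s ∈ S, WhyburnOpen f s) :
    WhyburnOpen f (⋃₀ S) := by
  have hX : IsOpen (Sum.inl ⁻¹' ⋃₀ S) := by
    rw [preimage_sUnion]
    exact isOpen_biUnion fun s hs => (h s hs).1
  have hY : ∀ s : S, IsOpen (Sum.inr ⁻¹' (s : Set (X ⊕ Y))) := fun s => (h s s.2).2.1
  refine ⟨hX, by rw [preimage_sUnion]; exact isOpen_biUnion fun s hs => hY ⟨s, hs⟩,
    fun K hK hKc => ?_⟩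
  obtain ⟨t, hKt⟩ := hKc.elim_finite_subcover _ hY fun y hy => by
    obtain ⟨s, hs, hys⟩ := hK hy
    exact mem_iUnion.2 ⟨⟨s, hs⟩, hys⟩
  obtain ⟨C, hCc, hCs, rfl⟩ := hKc.finite_compact_cover t _ (fun s _ => hY s) hKt
  have hsplit : f ⁻¹' (⋃ s ∈ t, C s) ∩ (Sum.inl ⁻¹' ⋃₀ S)ᶜ =
      ⋃ s ∈ t, (f ⁻¹' C s ∩ (Sum.inl ⁻¹' (s : Set (X ⊕ Y)))ᶜ) ∩ (Sum.inl ⁻¹' ⋃₀ S)ᶜ := by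
    ext x
    simp only [mem_inter_iff, mem_preimage, mem_iUnion, mem_compl_iff, mem_sUnion, not_exists,
      not_and, exists_prop]
    exact ⟨fun ⟨⟨s, hs, hx⟩, hxS⟩ => ⟨s, hs, ⟨hx, hxS s s.2⟩, hxS⟩,
      fun ⟨s, hs, ⟨hx, _⟩, hxS⟩ => ⟨⟨s, hs, hx⟩, hxS⟩⟩
  rw [hsplit]
  exact t.finite_toSet.isCompact_biUnion fun s _ =>
    ((h s s.2).2.2 (C s) (hCs s) (hCc s)).inter_right hX.isClosed_compl

def whyburnTop [T2Space Y] (f : X → Y) : TopologicalSpace (X ⊕ Y) where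
  IsOpen := WhyburnOpen f
  isOpen_univ := whyburnOpen_univ f
  isOpen_inter _ _ := WhyburnOpen.inter
  isOpen_sUnion _ := WhyburnOpen.sUnion

lemma whyburnOpen_inl_image (f : X → Y) {U : Set X} (hU : IsOpen U) :
    WhyburnOpen f (Sum.inl '' U) := by
  have hY : Sum.inr ⁻¹' (Sum.inl '' U : Set (X ⊕ Y)) = ∅ := by ext; simp
  refine ⟨by rwa [preimage_image_eq _ Sum.inl_injective], hY ▸ isOpen_empty, fun K hK _ => ?_⟩
  rw [hY, subset_empty_iff] at hK
  simp [hK]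

end Whyburn

lemma IsCompact.exists_prod_Ioi_subset {Y : Type*} [TopologicalSpace Y] {K : Set Y}
    (hK : IsCompact K) {V : Set (Y × EReal)} (hV : IsOpen V) (hKV : K ×ˢ {⊤} ⊆ V) :
    ∃ M : ℝ, K ×ˢ Ioi (M : EReal) ⊆ V := by
  obtain ⟨u, v, -, hv, hKu, htop, huv⟩ := generalized_tube_lemma hK isCompact_singleton hV hKV
  obtain ⟨M, hM⟩ := EReal.mem_nhds_top_iff.1 (hv.mem_nhds (htop rfl))
  exact ⟨M, (prod_mono hKu hM).trans huv⟩

section Teardrop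

variable {X Y : Type*} [TopologicalSpace X] [TopologicalSpace Y] {p : X → Y × ℝ}

lemma isOpen_teardropTop_inl_image {U : Set X} (hU : IsOpen U) :
    IsOpen[teardropTop p] (Sum.inl '' U) :=
  .basic _ (.inl ⟨U, hU, rfl⟩)

lemma isOpen_teardropTop_collapse_preimage {V : Set (Y × EReal)} (hV : IsOpen V) :
    IsOpen[teardropTop p] (teardropCollapse p ⁻¹' V) :=
  .basic _ (.inr ⟨V, hV, rfl⟩)

lemma continuous_teardropCollapse_comp_inl (hp : Continuous p) :
    Continuous (teardropCollapse p ∘ Sum.inl) :=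
  (continuous_fst.comp hp).prodMk (continuous_coe_real_ereal.comp (continuous_snd.comp hp))

omit [TopologicalSpace X] in
lemma continuous_teardropCollapse_comp_inr : Continuous (teardropCollapse p ∘ Sum.inr) :=
  continuous_id.prodMk continuous_const

lemma teardropTop_le_whyburnTop [T2Space Y] [LocallyCompactSpace Y] (hp : Continuous p) :
    teardropTop p ≤ whyburnTop (fun x => (p x).1) := by
  intro W hW
  rw [@isOpen_iff_forall_mem_open _ (teardropTop p)]
  rintro (x | y) hyW
  · exact ⟨Sum.inl '' (Sum.inl ⁻¹' W), image_preimage_subset _ _,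
      isOpen_teardropTop_inl_image hW.1, mem_image_of_mem _ hyW⟩
  · obtain ⟨K, hK, hyK, hKW⟩ := exists_compact_subset hW.2.1 hyW
    obtain ⟨M, hM⟩ := ((hW.2.2 K hKW hK).image (continuous_snd.comp hp)).bddAbove
    refine ⟨teardropCollapse p ⁻¹' (interior K ×ˢ Ioi (M : EReal)), ?_,
      isOpen_teardropTop_collapse_preimage (isOpen_interior.prod isOpen_Ioi),
      ⟨hyK, EReal.coe_lt_top M⟩⟩
    rintro (x | y') ⟨hxK, hxM⟩
    · by_contra hxW
      exact (hM ⟨x, ⟨interior_subset (s := K) hxK, hxW⟩, rfl⟩).not_gt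
        (EReal.coe_lt_coe_iff.1 hxM)
    · exact hKW (interior_subset hxK)

lemma whyburnOpen_teardropCollapse_preimage (hp : Continuous p) (hnonneg : ∀ x, 0 ≤ (p x).2)
    (hproper : ∀ K : Set (Y × ℝ), IsCompact K → IsCompact (p ⁻¹' K))
    {V : Set (Y × EReal)} (hV : IsOpen V) :
    WhyburnOpen (fun x => (p x).1) (teardropCollapse p ⁻¹' V) := by
  have hX : IsOpen (Sum.inl ⁻¹' (teardropCollapse p ⁻¹' V)) :=
    hV.preimage (continuous_teardropCollapse_comp_inl hp)
  refine ⟨hX, hV.preimage continuous_teardropCollapse_comp_inr, fun K hKV hK => ?_⟩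
  obtain ⟨M, hM⟩ := hK.exists_prod_Ioi_subset hV <| by
    rintro ⟨y, t⟩ ⟨hy, ht⟩
    obtain rfl : t = ⊤ := ht
    exact hKV hy
  have hbounded : (fun x => (p x).1) ⁻¹' K ∩ (Sum.inl ⁻¹' (teardropCollapse p ⁻¹' V))ᶜ =
      p ⁻¹' (K ×ˢ Icc 0 M) ∩ (Sum.inl ⁻¹' (teardropCollapse p ⁻¹' V))ᶜ := by
    ext x
    refine ⟨fun ⟨hxK, hxV⟩ => ⟨⟨hxK, hnonneg x, ?_⟩, hxV⟩, fun ⟨⟨hxK, _⟩, hxV⟩ => ⟨hxK, hxV⟩⟩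
    by_contra! hMx
    exact hxV (hM ⟨hxK, EReal.coe_lt_coe_iff.2 hMx⟩)
  rw [hbounded]
  exact (hproper _ (hK.prod isCompact_Icc)).inter_right hX.isClosed_compl

lemma whyburnTop_le_teardropTop [T2Space Y] (hp : Continuous p) (hnonneg : ∀ x, 0 ≤ (p x).2)
    (hproper : ∀ K : Set (Y × ℝ), IsCompact K → IsCompact (p ⁻¹' K)) :
    whyburnTop (fun x => (p x).1) ≤ teardropTop p := by
  refine le_generateFrom ?_
  rintro _ (⟨U, hU, rfl⟩ | ⟨V, hV, rfl⟩)
  · exact whyburnOpen_inl_image _ hU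
  · exact whyburnOpen_teardropCollapse_preimage hp hnonneg hproper hV

lemma isCompact_preimage_of_whyburnTop_le [T2Space Y] (hp : Continuous p)
    (h : whyburnTop (fun x => (p x).1) ≤ teardropTop p) {K : Set (Y × ℝ)} (hK : IsCompact K) :
    IsCompact (p ⁻¹' K) := by
  obtain ⟨b, hb⟩ := (hK.image continuous_snd).bddAbove
  have hW : WhyburnOpen (fun x => (p x).1) (teardropCollapse p ⁻¹' (univ ×ˢ Ioi (b : EReal))) :=
    h _ (isOpen_teardropTop_collapse_preimage (isOpen_univ.prod isOpen_Ioi))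
  refine (hW.2.2 _ (fun _ _ => ⟨trivial, EReal.coe_lt_top b⟩) (hK.image continuous_fst))
    |>.of_isClosed_subset (hK.isClosed.preimage hp) fun x hx => ⟨⟨p x, hx, rfl⟩, fun hxW => ?_⟩
  exact (hb ⟨p x, hx, rfl⟩).not_gt (EReal.coe_lt_coe_iff.1 hxW.2)

end Teardrop

theorem teardrop_to_unified_continuous_and_homeo_iff_proper_general
    {X Y : Type*} [TopologicalSpace X] [TopologicalSpace Y]
    [T2Space Y] [LocallyCompactSpace Y]
    (p : X → Y × ℝ) (hp : Continuous p) (hnonneg : ∀ x, 0 ≤ (p x).2) :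
    ((∀ K : Set (Y × ℝ), IsCompact K → IsCompact (p ⁻¹' K)) →
        ∀ W : Set (X ⊕ Y), WhyburnOpen (fun x => (p x).1) W →
          IsOpen[teardropTop p] W) ∧
      ((∀ W : Set (X ⊕ Y), WhyburnOpen (fun x => (p x).1) W ↔
          IsOpen[teardropTop p] W) ↔
        ∀ K : Set (Y × ℝ), IsCompact K → IsCompact (p ⁻¹' K)) :=
  ⟨fun _ => teardropTop_le_whyburnTop hp,
    fun hiff _ => isCompact_preimage_of_whyburnTop_le hp fun W => (hiff W).2,
    fun hproper W =>
      ⟨teardropTop_le_whyburnTop hp W, whyburnTop_le_teardropTop hp hnonneg hproper W⟩⟩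

/-- Proposition 3.17 / Corollary 3.18: for disjoint Hausdorff `X`, `Y` with
`Y` locally compact and `p : X → Y × [0, +∞)` continuous and proper, the
identity from the teardrop `X ∪_p Y` to Whyburn's unified space `X ⊕ Y` is
continuous (every Whyburn-open set is teardrop-open); combined with the
converse direction, the identity from `X ⊕ Y` to `X ∪_p Y` is a
homeomorphism iff `p` is proper. -/
theorem teardrop_to_unified_continuous_and_homeo_iff_proper
    {X Y : Type*} [TopologicalSpace X] [TopologicalSpace Y]
    [T2Space X] [T2Space Y] [LocallyCompactSpace Y]
    (p : X → Y × ℝ) (hp : Continuous p) (hnonneg : ∀ x, 0 ≤ (p x).2) :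
    ((∀ K : Set (Y × ℝ), IsCompact K → IsCompact (p ⁻¹' K)) →
        ∀ W : Set (X ⊕ Y), WhyburnOpen (fun x => (p x).1) W →
          IsOpen[teardropTop p] W) ∧
      ((∀ W : Set (X ⊕ Y), WhyburnOpen (fun x => (p x).1) W ↔
          IsOpen[teardropTop p] W) ↔
        ∀ K : Set (Y × ℝ), IsCompact K → IsCompact (p ⁻¹' K)) :=
  teardrop_to_unified_continuous_and_homeo_iff_proper_general p hp hnonneg
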